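/- Let C ⊆ ℝ^d be open, let Ω, E ⊆ C be open and let Γ ⊆ C, with Ω, Γ, E pairwise disjoint and C = Ω ∪ Γ ∪ E. Let k ∈ ℕ and let u₁, u₂ : ℝ^d → ℝ be C^k functions on ℝ^d. Define u : ℝ^d → ℝ by u(x) = u₁(x) for x ∈ Ω ∪ Γ and u(x) = u₂(x) for x ∈ E. If for every x ∈ Γ and every integer 0 ≤ j ≤ k the j-th iterated Fréchet derivatives of u₁ and u₂ agree at x (in particular u₁(x) = u₂(x) for x ∈ Γ), then u is C^k on C. -/

import Mathlib

/-!
Write the glued function as `u₁ + 1_E (u₂ - u₁)` on `C`. Every point of `C` on the frontier of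
`E` lies on `Γ`, where `v = u₂ - u₁` has vanishing `k`-jet. Truncating `v` by an indicator keeps it
`C^k`: away from the frontier nothing changes locally, and at a frontier point `‖1_E v‖ ≤ ‖v‖`
with `v` vanishing to first order, so `1_E v` is differentiable there with derivative
`0 = 1_E v'`. Since `v'` again has vanishing jet on the frontier, induction on `k` concludes.
-/

open Set Filter Topology Asymptotics

section EventuallyEq

variable {α β : Type*} [TopologicalSpace α] [Zero β] {s : Set α} {f : α → β} {x : α}

theorem indicator_eventuallyEq_of_mem_interior (hx : x ∈ interior s) : s.indicator f =ᶠ[𝓝 x] f :=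
  eventuallyEq_of_mem (mem_interior_iff_mem_nhds.mp hx) fun _ hy => indicator_of_mem hy f

theorem indicator_eventuallyEq_zero_of_mem_interior_compl (hx : x ∈ interior sᶜ) :
    s.indicator f =ᶠ[𝓝 x] 0 :=
  eventuallyEq_of_mem (mem_interior_iff_mem_nhds.mp hx) fun _ hy => indicator_of_notMem hy f

end EventuallyEq

section Indicator

-- `X` and `F` share a universe since the induction replaces `F` by `X →L[𝕜] F`.
universe u

variable {𝕜 : Type*} [NontriviallyNormedField 𝕜]
  {X : Type u} [NormedAddCommGroup X] [NormedSpace 𝕜 X]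
  {F : Type u} [NormedAddCommGroup F] [NormedSpace 𝕜 F]
  {s U : Set X} {v : X → F} {x : X}

theorem ContinuousAt.indicator_of_apply_eq_zero (hv : ContinuousAt v x) (h0 : v x = 0) :
    ContinuousAt (s.indicator v) x := by
  have hv0 : Tendsto v (𝓝 x) (𝓝 0) := h0 ▸ hv
  rw [ContinuousAt, indicator_apply_eq_zero.mpr fun _ => h0]
  exact squeeze_zero_norm (norm_indicator_le_norm_self v)
    (tendsto_zero_iff_norm_tendsto_zero.mp hv0)

theorem HasFDerivAt.indicator_of_apply_eq_zero (hv : HasFDerivAt v (0 : X →L[𝕜] F) x)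
    (h0 : v x = 0) : HasFDerivAt (s.indicator v) (0 : X →L[𝕜] F) x := by
  rw [hasFDerivAt_iff_isLittleO] at hv ⊢
  simp only [h0, indicator_apply_eq_zero.mpr fun _ => h0, zero_apply, sub_zero] at hv ⊢
  exact (isBigO_of_le _ (norm_indicator_le_norm_self v)).trans_isLittleO hv

theorem continuousAt_indicator (hv : ContinuousAt v x) (hx : x ∈ frontier s → v x = 0) :
    ContinuousAt (s.indicator v) x := by
  by_cases hxs : x ∈ frontier s
  · exact hv.indicator_of_apply_eq_zero (hx hxs)
  rw [← mem_compl_iff, compl_frontier_eq_union_interior] at hxs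
  rcases hxs with hxs | hxs
  · exact hv.congr (indicator_eventuallyEq_of_mem_interior hxs).symm
  · exact continuousAt_const.congr
      (indicator_eventuallyEq_zero_of_mem_interior_compl (f := v) hxs).symm

theorem hasFDerivAt_indicator (hv : DifferentiableAt 𝕜 v x)
    (hx : x ∈ frontier s → v x = 0 ∧ fderiv 𝕜 v x = 0) :
    HasFDerivAt (s.indicator v) (s.indicator (fderiv 𝕜 v) x) x := by
  by_cases hxs : x ∈ frontier s
  · obtain ⟨h0, h1⟩ := hx hxs
    rw [indicator_apply_eq_zero.mpr fun _ => h1]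
    exact (h1 ▸ hv.hasFDerivAt).indicator_of_apply_eq_zero h0
  rw [← mem_compl_iff, compl_frontier_eq_union_interior] at hxs
  rcases hxs with hxs | hxs
  · rw [indicator_of_mem (interior_subset hxs)]
    exact hv.hasFDerivAt.congr_of_eventuallyEq (indicator_eventuallyEq_of_mem_interior hxs)
  · rw [indicator_of_notMem (interior_subset hxs : x ∈ sᶜ)]
    exact (hasFDerivAt_const 0 x).congr_of_eventuallyEq
      (indicator_eventuallyEq_zero_of_mem_interior_compl hxs)

theorem iteratedFDeriv_zero_eq_zero_iff {f : X → F} :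
    iteratedFDeriv 𝕜 0 f x = 0 ↔ f x = 0 := by
  rw [← norm_eq_zero, norm_iteratedFDeriv_zero, norm_eq_zero]

theorem iteratedFDeriv_one_eq_zero_iff {f : X → F} :
    iteratedFDeriv 𝕜 1 f x = 0 ↔ fderiv 𝕜 f x = 0 := by
  rw [← norm_eq_zero, norm_iteratedFDeriv_one, norm_eq_zero]

theorem iteratedFDeriv_fderiv_eq_zero_iff {f : X → F} {n : ℕ} :
    iteratedFDeriv 𝕜 n (fderiv 𝕜 f) x = 0 ↔ iteratedFDeriv 𝕜 (n + 1) f x = 0 := by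
  rw [← norm_eq_zero, norm_iteratedFDeriv_fderiv, norm_eq_zero]

theorem contDiffOn_indicator_of_iteratedFDeriv_eq_zero {k : ℕ} (hU : IsOpen U)
    (hv : ContDiff 𝕜 k v) (hfr : ∀ x ∈ U ∩ frontier s, ∀ j ≤ k, iteratedFDeriv 𝕜 j v x = 0) :
    ContDiffOn 𝕜 k (s.indicator v) U := by
  induction k generalizing F with
  | zero =>
    rw [CharP.cast_eq_zero, contDiffOn_zero]
    intro x hx
    refine (continuousAt_indicator hv.continuous.continuousAt fun hxs => ?_).continuousWithinAt
    exact iteratedFDeriv_zero_eq_zero_iff.mp (hfr x ⟨hx, hxs⟩ 0 le_rfl)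
  | succ n ih =>
    rw [Nat.cast_succ] at hv ⊢
    obtain ⟨hv_diff, -, hv'⟩ := contDiff_succ_iff_fderiv.mp hv
    have hderiv : ∀ x ∈ U, HasFDerivAt (s.indicator v) (s.indicator (fderiv 𝕜 v) x) x :=
      fun x hx => hasFDerivAt_indicator (hv_diff x) fun hxs =>
        ⟨iteratedFDeriv_zero_eq_zero_iff.mp (hfr x ⟨hx, hxs⟩ 0 (by omega)),
         iteratedFDeriv_one_eq_zero_iff.mp (hfr x ⟨hx, hxs⟩ 1 (by omega))⟩
    have hfr' : ∀ x ∈ U ∩ frontier s, ∀ j ≤ n, iteratedFDeriv 𝕜 j (fderiv 𝕜 v) x = 0 :=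
      fun x hx j hj => iteratedFDeriv_fderiv_eq_zero_iff.mpr (hfr x hx (j + 1) (by omega))
    rw [contDiffOn_succ_iff_fderiv_of_isOpen hU]
    exact ⟨fun x hx => (hderiv x hx).differentiableAt.differentiableWithinAt, by simp,
      (ih hv' hfr').congr fun x hx => (hderiv x hx).fderiv⟩

theorem contDiffOn_piecewise_of_iteratedFDeriv_eq {k : ℕ} {f g : X → F} [DecidablePred (· ∈ s)]
    (hU : IsOpen U) (hf : ContDiff 𝕜 k f) (hg : ContDiff 𝕜 k g)
    (hfg : ∀ x ∈ U ∩ frontier s, ∀ j ≤ k, iteratedFDeriv 𝕜 j f x = iteratedFDeriv 𝕜 j g x) :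
    ContDiffOn 𝕜 k (s.piecewise f g) U := by
  have hsplit : s.piecewise f g = g + s.indicator (f - g) := by
    ext x
    by_cases hx : x ∈ s <;> simp [hx]
  rw [hsplit]
  refine hg.contDiffOn.add (contDiffOn_indicator_of_iteratedFDeriv_eq_zero hU (hf.sub hg) ?_)
  intro x hx j hj
  have hj' : (j : WithTop ℕ∞) ≤ k := by exact_mod_cast hj
  rw [iteratedFDeriv_sub_apply (hf.of_le hj').contDiffAt (hg.of_le hj').contDiffAt, hfg x hx j hj,
    sub_self]

end Indicator

theorem glued_function_contDiffOn_general {d : ℕ}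
    (C Ω E Γ : Set (EuclideanSpace ℝ (Fin d)))
    (hC : IsOpen C) (hΩ : IsOpen Ω) (hE : IsOpen E)
    (hΩE : Disjoint Ω E) (hΓE : Disjoint Γ E)
    (hcover : C = Ω ∪ Γ ∪ E)
    (k : ℕ) (u₁ u₂ u : EuclideanSpace ℝ (Fin d) → ℝ)
    (h1 : ContDiff ℝ k u₁) (h2 : ContDiff ℝ k u₂)
    (hu1 : ∀ x ∈ Ω ∪ Γ, u x = u₁ x) (hu2 : ∀ x ∈ E, u x = u₂ x)
    (hmatch : ∀ x ∈ Γ, ∀ j : ℕ, j ≤ k →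
      iteratedFDeriv ℝ j u₁ x = iteratedFDeriv ℝ j u₂ x) :
    ContDiffOn ℝ k u C := by
  classical
  have hfrontier : C ∩ frontier E ⊆ Γ := by
    rintro x ⟨hxC, hxfr⟩
    rw [hcover] at hxC
    rcases hxC with (hxΩ | hxΓ) | hxE
    · exact absurd hxfr ((hΩE.frontier_right hΩ).notMem_of_mem_left hxΩ)
    · exact hxΓ
    · exact absurd hxfr ((disjoint_frontier_iff_isOpen.mpr hE).notMem_of_mem_right hxE)
  refine (contDiffOn_piecewise_of_iteratedFDeriv_eq hC h2 h1 fun x hx j hj =>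
    (hmatch x (hfrontier hx) j hj).symm).congr fun x hx => ?_
  rw [hcover] at hx
  rcases hx with hx | hx
  · rw [hu1 x hx, piecewise_eq_of_notMem _ _ _ ((hΩE.union_left hΓE).notMem_of_mem_left hx)]
  · rw [hu2 x hx, piecewise_eq_of_mem _ _ _ hx]

/-- Gluing principle: a function that equals a `C^k` function `u₁` on `Ω ∪ Γ`
and a `C^k` function `u₂` on `E`, where `C = Ω ∪ Γ ∪ E` with `Ω, Γ, E`
pairwise disjoint and `C, Ω, E` open, is `C^k` on `C` provided all iterated
derivatives of `u₁` and `u₂` up to order `k` agree on the interface `Γ`. -/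
theorem glued_function_contDiffOn {d : ℕ}
    (C Ω E Γ : Set (EuclideanSpace ℝ (Fin d)))
    (hC : IsOpen C) (hΩ : IsOpen Ω) (hE : IsOpen E)
    (hΩΓ : Disjoint Ω Γ) (hΩE : Disjoint Ω E) (hΓE : Disjoint Γ E)
    (hcover : C = Ω ∪ Γ ∪ E)
    (k : ℕ) (u₁ u₂ u : EuclideanSpace ℝ (Fin d) → ℝ)
    (h1 : ContDiff ℝ k u₁) (h2 : ContDiff ℝ k u₂)
    (hu1 : ∀ x ∈ Ω ∪ Γ, u x = u₁ x) (hu2 : ∀ x ∈ E, u x = u₂ x)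
    (hmatch : ∀ x ∈ Γ, ∀ j : ℕ, j ≤ k →
      iteratedFDeriv ℝ j u₁ x = iteratedFDeriv ℝ j u₂ x) :
    ContDiffOn ℝ k u C :=
  glued_function_contDiffOn_general C Ω E Γ hC hΩ hE hΩE hΓE hcover k u₁ u₂ u h1 h2 hu1 hu2 hmatch
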